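/- arXiv:2412.20228 — 8 statements merged into one kernel-verified Lean document; each statement's English description precedes it below -/
import Mathlib

section
/- Let M ≥ 1, let ξ_1 ≤ ξ_2 ≤ … ≤ ξ_M be a nondecreasing sequence of real numbers, let v̂_1,…,v̂_M be arbitrary real numbers, and let (ṽ_1,…,ṽ_M) be an isotonic regression of (v̂_1,…,v̂_M). Then max_{1≤j≤M} |ṽ_j − ξ_j| ≤ max_{1≤j≤M} |v̂_j − ξ_j|. -/
/-!
Let `ε` be the maximal error of the data, so the data lie in the band `[ξ - ε, ξ + ε]`, whose
edges are monotone. Clamping a monotone fit into such a band keeps it monotone and strictly lowers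
its squared error wherever it leaves the band; hence an isotonic regression stays inside the band.
-/

open Set Finset

lemma sq_sub_max_min_le {a x lo hi : ℝ} (hlo : lo ≤ a) (hhi : a ≤ hi) :
    (a - max lo (min x hi)) ^ 2 ≤ (a - x) ^ 2 := by
  rcases le_total x lo with hx | hx
  · rw [min_eq_left (hx.trans (hlo.trans hhi)), max_eq_left hx]
    nlinarith
  rcases le_total x hi with hx' | hx'
  · rw [min_eq_left hx', max_eq_right hx]
  · rw [min_eq_right hx', max_eq_right (hlo.trans hhi)]
    nlinarith

lemma sq_sub_max_min_lt {a x lo hi : ℝ} (hlo : lo ≤ a) (hhi : a ≤ hi) (hx : x ∉ Icc lo hi) :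
    (a - max lo (min x hi)) ^ 2 < (a - x) ^ 2 := by
  rcases not_and_or.mp hx with hx | hx <;> rw [not_le] at hx
  · rw [min_eq_left (hx.le.trans (hlo.trans hhi)), max_eq_left hx.le]
    nlinarith
  · rw [min_eq_right hx.le, max_eq_right (hlo.trans hhi)]
    nlinarith

def IsIsotonicRegression {ι : Type*} [Fintype ι] [Preorder ι] (v w : ι → ℝ) : Prop :=
  Monotone w ∧ ∀ w' : ι → ℝ, Monotone w' → ∑ j, (v j - w j) ^ 2 ≤ ∑ j, (v j - w' j) ^ 2

theorem IsIsotonicRegression.mem_Icc {ι : Type*} [Fintype ι] [Preorder ι] {v w lo hi : ι → ℝ}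
    (hw : IsIsotonicRegression v w) (hlo : Monotone lo) (hhi : Monotone hi)
    (hv : ∀ j, v j ∈ Icc (lo j) (hi j)) (j : ι) : w j ∈ Icc (lo j) (hi j) := by
  by_contra hj
  set clamped : ι → ℝ := fun i => max (lo i) (min (w i) (hi i))
  have hclamped : Monotone clamped := hlo.max (hw.1.min hhi)
  have hlt : ∑ i, (v i - clamped i) ^ 2 < ∑ i, (v i - w i) ^ 2 :=
    sum_lt_sum (fun i _ => sq_sub_max_min_le (hv i).1 (hv i).2)
      ⟨j, mem_univ j, sq_sub_max_min_lt (hv j).1 (hv j).2 hj⟩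
  exact (hw.2 clamped hclamped).not_gt hlt

/-- Lemma 3.1: applying isotonic regression to noisy estimates of a nondecreasing
sequence never increases the maximal absolute error. -/
theorem isotonic_regression_sup_error_le
    (M : ℕ) (hM : 1 ≤ M)
    (ξ : Fin M → ℝ) (hξ : Monotone ξ)
    (vh w : Fin M → ℝ)
    (hw_mono : Monotone w)
    (hw_min : ∀ w' : Fin M → ℝ, Monotone w' →
      ∑ j, (vh j - w j) ^ 2 ≤ ∑ j, (vh j - w' j) ^ 2) :
    (Finset.univ.sup' ⟨⟨0, hM⟩, Finset.mem_univ _⟩ fun j => |w j - ξ j|) ≤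
      Finset.univ.sup' ⟨⟨0, hM⟩, Finset.mem_univ _⟩ fun j => |vh j - ξ j| := by
  set ε := Finset.univ.sup' ⟨⟨0, hM⟩, Finset.mem_univ _⟩ fun j => |vh j - ξ j|
  have hv : ∀ j, vh j ∈ Icc (ξ j - ε) (ξ j + ε) := fun j => by
    have := abs_sub_le_iff.mp (le_sup' (fun j => |vh j - ξ j|) (mem_univ j))
    constructor <;> linarith
  refine sup'_le _ _ fun j _ => abs_sub_le_iff.mpr ?_
  have hwj : w j ∈ Icc (ξ j - ε) (ξ j + ε) :=
    IsIsotonicRegression.mem_Icc ⟨hw_mono, hw_min⟩ (fun _ _ h => sub_le_sub_right (hξ h) ε)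
      (hξ.add_const ε) hv j
  constructor <;> linarith [hwj.1, hwj.2]
end

section
/- Let k ≥ 1 and let ξ_1 ≤ ξ_2 ≤ … ≤ ξ_k be a nondecreasing sequence of real numbers. Let a, c, b be real numbers with a > c > b. Then max_{1≤j≤k} |c − ξ_j| < max(|a − ξ_1|, |b − ξ_k|). -/
/-! Each deviation `|c - ξ j|` is controlled from one side by the first endpoint and from the
other by the last: `c - ξ j ≤ c - ξ₁ < a - ξ₁` and `ξ j - c ≤ ξ_k - c < ξ_k - b`. -/

section

variable {α : Type*} [AddCommGroup α] [LinearOrder α] [IsOrderedAddMonoid α]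

theorem abs_sub_lt_max_of_mem_Icc {x lo hi a b c : α} (hx : x ∈ Set.Icc lo hi)
    (hca : c < a) (hbc : b < c) : |c - x| < max |a - lo| |b - hi| := by
  rw [abs_sub_lt_iff]
  constructor
  · calc c - x ≤ c - lo := sub_le_sub_left hx.1 c
      _ < a - lo := sub_lt_sub_right hca lo
      _ ≤ |a - lo| := le_abs_self _
      _ ≤ max |a - lo| |b - hi| := le_max_left _ _
  · calc x - c ≤ hi - c := sub_le_sub_right hx.2 c
      _ < hi - b := sub_lt_sub_left hbc hi
      _ ≤ |b - hi| := neg_sub b hi ▸ neg_le_abs _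
      _ ≤ max |a - lo| |b - hi| := le_max_right _ _

theorem Monotone.abs_sub_lt_max_of_mem_Icc {ι : Type*} [Preorder ι] {ξ : ι → α}
    (hξ : Monotone ξ) {i j l : ι} (hj : j ∈ Set.Icc i l) {a b c : α}
    (hca : c < a) (hbc : b < c) : |c - ξ j| < max |a - ξ i| |b - ξ l| :=
  _root_.abs_sub_lt_max_of_mem_Icc ⟨hξ hj.1, hξ hj.2⟩ hca hbc

end

/-- Key per-block inequality in the proof of Lemma 3.1: on a level set of the
isotonic regression with common fitted value `c`, where the first original value `a`
and last original value `b` satisfy `a > c > b`, the maximal deviation of the constant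
fit `c` from the nondecreasing target sequence `ξ` is strictly smaller than the larger
of the endpoint deviations of `a` and `b`. -/
theorem block_max_deviation_lt
    (k : ℕ) (hk : 1 ≤ k)
    (ξ : Fin k → ℝ) (hξ : Monotone ξ)
    (a c b : ℝ) (hac : a > c) (hcb : c > b) :
    (Finset.univ.sup' ⟨⟨0, hk⟩, Finset.mem_univ _⟩ fun j => |c - ξ j|) <
      max (|a - ξ ⟨0, hk⟩|) (|b - ξ ⟨k - 1, by omega⟩|) := by
  exact (Finset.sup'_lt_iff _).mpr fun j _ => hξ.abs_sub_lt_max_of_mem_Icc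
    ⟨Fin.le_def.mpr (Nat.zero_le _), Fin.le_def.mpr (Nat.le_sub_one_of_lt j.isLt)⟩ hac hcb
end

section
/- Let ε > 0, let p_1 < p_2 < … < p_M be real numbers (M ≥ 2), and let f : [p_1, p_M] → ℝ be nondecreasing with f(p_{j+1}) − f(p_j) ≤ ε for each j ∈ {1,…,M−1}. Let v_1,…,v_M be arbitrary real numbers and let g be the linear interpolant of the values v_j at the points p_j. Then sup_{p∈[p_1,p_M]} |g(p) − f(p)| ≤ 2ε + 3·max_{1≤j≤M} |v_j − f(p_j)|. -/
/-! On the grid cell `[p j, p (j + 1)]` containing `x`, the interpolant `g x` lies between `v j`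
and `v (j + 1)`, which are within `D = max_k |v k - f (p k)|` of `f (p j)` and `f (p (j + 1))`,
while by monotonicity `f x` lies between `f (p j)` and `f (p (j + 1))`, at distance at most `ε`.
Hence `|g x - f x| ≤ ε + D`, which is sharper than the claim. -/

open Set

theorem exists_mem_Icc_succ_of_mem_Icc {α : Type*} [LinearOrder α] (p : ℕ → α) {n : ℕ}
    (hn : 0 < n) {x : α} (hx : x ∈ Icc (p 0) (p n)) : ∃ j < n, x ∈ Icc (p j) (p (j + 1)) := by
  induction n, hn using Nat.le_induction with
  | base => exact ⟨0, one_pos, hx⟩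
  | succ n _ ih =>
    by_cases hxn : x ≤ p n
    · obtain ⟨j, hj, hxj⟩ := ih ⟨hx.1, hxn⟩
      exact ⟨j, hj.trans (lt_add_one n), hxj⟩
    · exact ⟨n, lt_add_one n, (not_le.1 hxn).le, hx.2⟩

theorem add_mul_div_mem_uIcc {a b x : ℝ} (hx : x ∈ Icc a b) (u w : ℝ) :
    u + (x - a) * (w - u) / (b - a) ∈ uIcc u w := by
  have ht : (x - a) / (b - a) ∈ Icc (0 : ℝ) 1 :=
    ⟨div_nonneg (sub_nonneg.2 hx.1) (sub_nonneg.2 (hx.1.trans hx.2)),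
      div_le_one_of_le₀ (sub_le_sub_right hx.2 a) (sub_nonneg.2 (hx.1.trans hx.2))⟩
  rw [← segment_eq_uIcc]
  convert lineMap_mem_segment ℝ u w ht using 1
  rw [AffineMap.lineMap_apply_ring']
  ring

theorem abs_sub_le_add_of_mem_uIcc {c d y u w z ε D : ℝ} (hcy : c ≤ y) (hyd : y ≤ d)
    (hdc : d - c ≤ ε) (hu : |u - c| ≤ D) (hw : |w - d| ≤ D) (hz : z ∈ uIcc u w) :
    |z - y| ≤ ε + D := by
  rw [abs_le] at hu hw ⊢
  rcases mem_uIcc.1 hz with ⟨h₁, h₂⟩ | ⟨h₁, h₂⟩ <;> constructor <;> linarith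

/-- The deterministic bound (2ε + 3·sup) from the proof of Theorem 3.2(ii): if `f` is
nondecreasing with consecutive increments at most `ε` along the grid `p 0 < … < p (M-1)`,
then the linear interpolant `g` of arbitrary values `v j` satisfies
`|g x - f x| ≤ 2ε + 3·max_j |v j - f (p j)|` on `[p 0, p (M-1)]`. -/
theorem linear_interpolant_error_le_two_eps_add_three_max
    (ε : ℝ) (hε : 0 < ε)
    (M : ℕ) (hM : 2 ≤ M)
    (p : ℕ → ℝ) (hp : ∀ j, j + 1 < M → p j < p (j + 1))
    (f : ℝ → ℝ)
    (hf : MonotoneOn f (Set.Icc (p 0) (p (M - 1))))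
    (hgap : ∀ j, j + 1 < M → f (p (j + 1)) - f (p j) ≤ ε)
    (v : ℕ → ℝ)
    (g : ℝ → ℝ)
    (hg : ∀ j, j + 1 < M → ∀ x ∈ Set.Icc (p j) (p (j + 1)),
      g x = v j + (x - p j) * (v (j + 1) - v j) / (p (j + 1) - p j)) :
    ∀ x ∈ Set.Icc (p 0) (p (M - 1)),
      |g x - f x| ≤ 2 * ε + 3 * ((Finset.range M).sup'
        (Finset.nonempty_range_iff.mpr (by omega)) fun j => |v j - f (p j)|) := by
  intro x hx
  have hp_mono : MonotoneOn p (Iic (M - 1)) :=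
    (strictMonoOn_Iic_of_lt_succ fun m hm => hp m (by omega)).monotoneOn
  have hp_mem : ∀ k ≤ M - 1, p k ∈ Icc (p 0) (p (M - 1)) := fun k hk =>
    ⟨hp_mono (Nat.zero_le _) hk (Nat.zero_le k), hp_mono hk (mem_Iic.2 le_rfl) hk⟩
  have hv : ∀ k < M, |v k - f (p k)| ≤ (Finset.range M).sup'
      (Finset.nonempty_range_iff.mpr (by omega)) fun j => |v j - f (p j)| := fun k hk =>
    Finset.le_sup' (fun j => |v j - f (p j)|) (Finset.mem_range.2 hk)
  obtain ⟨j, hj, hxj⟩ := exists_mem_Icc_succ_of_mem_Icc p (by omega : 0 < M - 1) hx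
  have hj₁ : j + 1 < M := by omega
  rw [hg j hj₁ x hxj]
  have hcell := abs_sub_le_add_of_mem_uIcc (hf (hp_mem j (by omega)) hx hxj.1)
    (hf hx (hp_mem (j + 1) (by omega)) hxj.2) (hgap j hj₁) (hv j (by omega)) (hv (j + 1) hj₁)
    (add_mul_div_mem_uIcc hxj (v j) (v (j + 1)))
  linarith [(abs_nonneg _).trans (hv 0 (by omega))]
end

section
/- For every τ > 0 and every u ∈ ℝ, |f_τ(u) − |u|| ≤ τ·log 2, and the bound is attained at u = 0, i.e. f_τ(0) − |0| = τ·log 2. Consequently, for every sequence τ_n → 0⁺, the functions f_{τ_n} converge uniformly on ℝ to the absolute value function. -/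
/-- Hutson's smooth approximation of the absolute value. -/
noncomputable def gSmooth (τ u : ℝ) : ℝ :=
  τ * (Real.log (Real.exp (-u / τ) + 1) + Real.log (Real.exp (u / τ) + 1))

/-- The hyperbolic-tangent smooth approximation of the absolute value. -/
noncomputable def hSmooth (τ u : ℝ) : ℝ := u * Real.tanh (u / τ)

/-- The mixed smooth approximation `f_τ = (g_τ + h_τ)/2` of the absolute value. -/
noncomputable def fSmooth (τ u : ℝ) : ℝ := (gSmooth τ u + hSmooth τ u) / 2

/-!
Writing `x = u / τ ≥ 0`, one has `f_τ(u) - u = τ (log (1 + e^{-x}) - x / (e^{2x} + 1))`.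
The logarithm lies in `(0, log 2]`, and it dominates the subtracted term because
`x / (e^{2x} + 1) ≤ x e^{-2x} ≤ e^{-x} / 2 ≤ log (1 + e^{-x})`, the middle step being `2x ≤ e^x`.
Since `f_τ` is even, this bounds `|f_τ(u) - |u||` by `τ log 2`, with equality at `u = 0`.
-/

open Real Filter Topology

theorem tendstoUniformly_of_dist_le {ι α β : Type*} [PseudoMetricSpace β] {l : Filter ι}
    {F : ι → α → β} {f : α → β} {δ : ι → ℝ} (hF : ∀ n x, dist (f x) (F n x) ≤ δ n)
    (hδ : Tendsto δ l (𝓝 0)) : TendstoUniformly F f l :=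
  Metric.tendstoUniformly_iff.2 fun _ hε =>
    (hδ.eventually_lt_const hε).mono fun n hn x => (hF n x).trans_lt hn

theorem fSmooth_neg (τ u : ℝ) : fSmooth τ (-u) = fSmooth τ u := by
  simp only [fSmooth, gSmooth, hSmooth, neg_neg, neg_div, tanh_neg]
  ring

theorem fSmooth_zero (τ : ℝ) : fSmooth τ 0 = τ * log 2 := by
  norm_num [fSmooth, gSmooth, hSmooth]
  ring

noncomputable def fSmoothError (x : ℝ) : ℝ := log (1 + exp (-x)) - x / (exp (2 * x) + 1)

theorem log_exp_add_one (x : ℝ) : log (exp x + 1) = x + log (1 + exp (-x)) := by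
  rw [← log_exp x, ← log_mul (exp_ne_zero _) (by positivity), mul_add, ← exp_add]
  simp [add_comm]

theorem tanh_eq_one_sub_two_div (x : ℝ) : tanh x = 1 - 2 / (exp (2 * x) + 1) := by
  rw [tanh_eq, exp_neg, show 2 * x = x + x by ring, exp_add]
  field_simp
  ring

theorem fSmooth_sub_self {τ : ℝ} (hτ : τ ≠ 0) (u : ℝ) :
    fSmooth τ u - u = τ * fSmoothError (u / τ) := by
  obtain ⟨x, rfl⟩ : ∃ x, u = τ * x := ⟨u / τ, by field_simp⟩
  simp only [fSmooth, gSmooth, hSmooth, fSmoothError, neg_div, mul_div_cancel_left₀ x hτ,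
    log_exp_add_one, tanh_eq_one_sub_two_div, add_comm (exp (-x)) 1]
  ring

theorem fSmoothError_le_log_two {x : ℝ} (hx : 0 ≤ x) : fSmoothError x ≤ log 2 := by
  have hlog : log (1 + exp (-x)) ≤ log 2 :=
    log_le_log (by positivity) (by linarith [exp_le_one_iff.2 (neg_nonpos.2 hx)])
  have : 0 ≤ x / (exp (2 * x) + 1) := by positivity
  rw [fSmoothError]; linarith

theorem fSmoothError_nonneg {x : ℝ} (hx : 0 ≤ x) : 0 ≤ fSmoothError x := by
  set t := exp (-x)
  have ht : 0 < t := exp_pos _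
  have ht1 : t ≤ 1 := exp_le_one_iff.2 (neg_nonpos.2 hx)
  have two_mul_le_exp : 2 * x ≤ exp x := by nlinarith [quadratic_le_exp_of_nonneg hx]
  have hxt : 2 * x * t ≤ 1 := calc
    2 * x * t ≤ exp x * t := by gcongr
    _ = 1 := by rw [← exp_add, add_neg_cancel, exp_zero]
  have hexp : exp (2 * x) = (t * t)⁻¹ := by rw [← exp_add, ← exp_neg]; ring_nf
  have : x / (exp (2 * x) + 1) ≤ log (1 + t) := calc
    x / (exp (2 * x) + 1) ≤ x / exp (2 * x) := by gcongr; linarith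
    _ = x * t * t := by rw [hexp]; field_simp
    _ ≤ t / 2 := by nlinarith
    _ ≤ 2 * t / (t + 2) := by rw [le_div_iff₀ (by positivity)]; nlinarith
    _ ≤ log (1 + t) := le_log_one_add_of_nonneg ht.le
  rw [fSmoothError]; linarith

theorem abs_fSmooth_sub_abs_le {τ : ℝ} (hτ : 0 < τ) (u : ℝ) :
    abs (fSmooth τ u - |u|) ≤ τ * log 2 := by
  wlog hu : 0 ≤ u generalizing u
  · simpa only [fSmooth_neg, abs_neg] using this (-u) (by linarith)
  have hx : 0 ≤ u / τ := div_nonneg hu hτ.le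
  rw [abs_of_nonneg hu, fSmooth_sub_self hτ.ne',
    abs_of_nonneg (mul_nonneg hτ.le (fSmoothError_nonneg hx))]
  exact mul_le_mul_of_nonneg_left (fSmoothError_le_log_two hx) hτ.le

/-- `|f_τ(u) − |u|| ≤ τ·log 2` for all `u`, with equality (as a signed error) at `u = 0`;
consequently `f_{τ_n}` converges uniformly on `ℝ` to the absolute value whenever
`τ_n → 0⁺`. Used in the proof of Theorem 3.4. -/
theorem fSmooth_uniform_approx :
    (∀ τ : ℝ, 0 < τ →
      (∀ u : ℝ, abs (fSmooth τ u - |u|) ≤ τ * Real.log 2) ∧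
      fSmooth τ 0 - |(0 : ℝ)| = τ * Real.log 2) ∧
    (∀ τ : ℕ → ℝ, (∀ n, 0 < τ n) → Filter.Tendsto τ Filter.atTop (nhds 0) →
      TendstoUniformly (fun n u => fSmooth (τ n) u) (fun u => |u|) Filter.atTop) := by
  refine ⟨fun τ hτ => ⟨abs_fSmooth_sub_abs_le hτ, by simp [fSmooth_zero]⟩, fun τ hτ hτ0 => ?_⟩
  refine tendstoUniformly_of_dist_le (δ := fun n => τ n * log 2)
    (fun n u => (dist_comm _ _).trans_le (abs_fSmooth_sub_abs_le (hτ n) u)) ?_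
  simpa using hτ0.mul_const (log 2)
end

section
/- For every τ > 0 and every u ∈ ℝ, the function h_τ(u) = u·tanh(u/τ) underestimates the absolute value: u·tanh(u/τ) ≤ |u|, and the error is uniformly small: |u| − u·tanh(u/τ) ≤ τ/e. -/
/-!
Since `u ↦ u·tanh(u/τ)` is even, it equals `|u|·tanh(|u|/τ)`, so only `u ≥ 0` matters. There
`tanh < 1` gives the underestimate, and with `x = u/τ` the error is
`τ·x·(1 - tanh x) = τ·2x/(e^{2x} + 1) ≤ τ·(2x)e^{-2x} ≤ τ/e`, the maximum of `y e^{-y}` being `1/e`.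
-/

open Real

lemma Real.one_sub_tanh_le (x : ℝ) : 1 - tanh x ≤ 2 * exp (-(2 * x)) := by
  have hexp : exp x * exp (-x) = 1 := by rw [← exp_add, add_neg_cancel, exp_zero]
  have hexp2 : exp (-(2 * x)) = exp (-x) * exp (-x) := by rw [← exp_add]; ring_nf
  calc 1 - tanh x = 2 * exp (-x) / (exp x + exp (-x)) := by
        rw [tanh_eq]; field_simp; ring
    _ ≤ 2 * exp (-x) / exp x := by gcongr; linarith [exp_pos (-x)]
    _ = 2 * exp (-(2 * x)) := by rw [hexp2]; field_simp; linear_combination -hexp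

lemma Real.mul_one_sub_tanh_le_exp_neg_one {x : ℝ} (hx : 0 ≤ x) :
    x * (1 - tanh x) ≤ exp (-1) :=
  calc x * (1 - tanh x) ≤ x * (2 * exp (-(2 * x))) := by gcongr; exact one_sub_tanh_le x
    _ = 2 * x * exp (-(2 * x)) := by ring
    _ ≤ exp (-1) := mul_exp_neg_le_exp_neg_one _

lemma hSmooth_eq_abs_mul_tanh_abs (τ u : ℝ) : hSmooth τ u = |u| * tanh (|u| / τ) := by
  rcases abs_cases u with ⟨h, _⟩ | ⟨h, _⟩ <;> simp [hSmooth, h, neg_div, tanh_neg]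

lemma hSmooth_le_abs (τ u : ℝ) : hSmooth τ u ≤ |u| := by
  rw [hSmooth_eq_abs_mul_tanh_abs]
  exact mul_le_of_le_one_right (abs_nonneg u) (tanh_lt_one _).le

lemma abs_sub_hSmooth_le {τ : ℝ} (hτ : 0 < τ) (u : ℝ) : |u| - hSmooth τ u ≤ τ / exp 1 := by
  have key := mul_one_sub_tanh_le_exp_neg_one (div_nonneg (abs_nonneg u) hτ.le)
  calc |u| - hSmooth τ u = τ * (|u| / τ * (1 - tanh (|u| / τ))) := by
        rw [hSmooth_eq_abs_mul_tanh_abs]; field_simp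
    _ ≤ τ * exp (-1) := by gcongr
    _ = τ / exp 1 := by rw [exp_neg, div_eq_mul_inv]

/-- `h_τ(u) = u·tanh(u/τ)` underestimates the absolute value, with uniformly small
error: `u·tanh(u/τ) ≤ |u|` and `|u| − u·tanh(u/τ) ≤ τ/e`. -/
theorem hSmooth_underestimates (τ : ℝ) (hτ : 0 < τ) (u : ℝ) :
    hSmooth τ u ≤ |u| ∧ |u| - hSmooth τ u ≤ τ / Real.exp 1 :=
  ⟨hSmooth_le_abs τ u, abs_sub_hSmooth_le hτ u⟩
end

section
/- Let α ∈ ℝ, β > 0, κ > 0 and r > 0 with rβ < 1. Then the function p ↦ exp(rα)·(p/(1−p))^{rβ}·exp(rβκp) is integrable on (0,1) and ∫₀¹ exp(rα)·(p/(1−p))^{rβ}·exp(rβκp) dp = exp(rα) · (π·rβ / sin(π·rβ)) · Σ_{n=0}^∞ [(1+rβ)_n / ((2)_n · n!)] · (rβκ)^n, where the series on the right converges. -/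
/-!
With `s = rβ` and `z = rβκ`, write `(p/(1-p))^s = p^s (1-p)^(-s)` and expand `exp(zp)` as a
power series. Termwise integration is legitimate because the integrals of the absolute values
of the terms form the same series at `|z|`, which converges. The `n`-th term is a Beta integral
`B(1+s+n, 1-s) = Γ(1+s) Γ(1-s) (1+s)ₙ / (2)ₙ`, and `Γ(1+s) Γ(1-s) = πs / sin(πs)` by Euler's
reflection formula. This is Euler's integral representation of `₁F₁(a, b; z)` at `a = 1+s`,
`b = 2`.
-/

open MeasureTheory Set

lemma Real.Gamma_add_nat_eq_mul_prod {a : ℝ} (ha : ∀ k : ℕ, a + k ≠ 0) (n : ℕ) :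
    Real.Gamma (a + n) = Real.Gamma a * ∏ i ∈ Finset.range n, (a + i) := by
  induction n with
  | zero => simp
  | succ n ih =>
    rw [Nat.cast_succ, ← add_assoc, Real.Gamma_add_one (ha n), ih, Finset.prod_range_succ]
    ring

lemma Real.Gamma_one_add_mul_Gamma_one_sub {s : ℝ} (hs : s ≠ 0) :
    Real.Gamma (1 + s) * Real.Gamma (1 - s) = Real.pi * s / Real.sin (Real.pi * s) := by
  rw [add_comm, Real.Gamma_add_one hs, mul_assoc, Real.Gamma_mul_Gamma_one_sub]
  ring

lemma ofReal_rpow_mul_one_sub_rpow {x : ℝ} (hx : x ∈ Icc (0 : ℝ) 1) (a b : ℝ) :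
    ((x ^ (a - 1) * (1 - x) ^ (b - 1) : ℝ) : ℂ) =
      (x : ℂ) ^ ((a : ℂ) - 1) * (1 - (x : ℂ)) ^ ((b : ℂ) - 1) := by
  rw [Complex.ofReal_mul, Complex.ofReal_cpow hx.1, Complex.ofReal_cpow (sub_nonneg.2 hx.2)]
  push_cast
  rfl

lemma Complex.betaIntegral_ofReal (a b : ℝ) :
    Complex.betaIntegral a b = ∫ x in Ioo (0 : ℝ) 1, x ^ (a - 1) * (1 - x) ^ (b - 1) := by
  rw [← integral_Ioc_eq_integral_Ioo, ← intervalIntegral.integral_of_le zero_le_one,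
    ← intervalIntegral.integral_ofReal, Complex.betaIntegral]
  refine intervalIntegral.integral_congr fun x hx => ?_
  rw [uIcc_of_le zero_le_one] at hx
  exact (ofReal_rpow_mul_one_sub_rpow hx a b).symm

lemma integrableOn_rpow_mul_one_sub_rpow {a b : ℝ} (ha : 0 < a) (hb : 0 < b) :
    IntegrableOn (fun x : ℝ => x ^ (a - 1) * (1 - x) ^ (b - 1)) (Ioo 0 1) := by
  have h := Complex.betaIntegral_convergent (u := a) (v := b) (by simpa) (by simpa)
  rw [intervalIntegrable_iff_integrableOn_Ioc_of_le zero_le_one] at h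
  refine (IntegrableOn.congr_fun h.re (fun x hx => ?_) measurableSet_Ioc).mono_set
    Ioo_subset_Ioc_self
  rw [RCLike.re_to_complex, ← ofReal_rpow_mul_one_sub_rpow (Ioc_subset_Icc_self hx),
    Complex.ofReal_re]

lemma integral_rpow_mul_one_sub_rpow {a b : ℝ} (ha : 0 < a) (hb : 0 < b) :
    ∫ x in Ioo (0 : ℝ) 1, x ^ (a - 1) * (1 - x) ^ (b - 1) =
      Real.Gamma a * Real.Gamma b / Real.Gamma (a + b) := by
  apply Complex.ofReal_injective
  rw [← Complex.betaIntegral_ofReal,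
    Complex.betaIntegral_eq_Gamma_mul_div _ _ (by simpa) (by simpa)]
  push_cast
  simp only [Complex.Gamma_ofReal, ← Complex.ofReal_add]

lemma integral_rpow_add_nat_mul_one_sub_rpow {a b : ℝ} (ha : 0 < a) (hab : a < b) (n : ℕ) :
    ∫ t in Ioo (0 : ℝ) 1, t ^ (a + n - 1) * (1 - t) ^ (b - a - 1) =
      Real.Gamma a * Real.Gamma (b - a) / Real.Gamma b *
        ((∏ i ∈ Finset.range n, (a + i)) / ∏ i ∈ Finset.range n, (b + i)) := by
  have hb : 0 < b := ha.trans hab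
  rw [integral_rpow_mul_one_sub_rpow (by positivity) (sub_pos.2 hab),
    show a + n + (b - a) = b + n by ring,
    Real.Gamma_add_nat_eq_mul_prod (fun k => by positivity),
    Real.Gamma_add_nat_eq_mul_prod (fun k => by positivity)]
  have : Real.Gamma b ≠ 0 := (Real.Gamma_pos_of_pos hb).ne'
  have : ∏ i ∈ Finset.range n, (b + i) ≠ 0 :=
    Finset.prod_ne_zero_iff.2 fun i _ => by positivity
  field_simp

/-- The coefficient of `zⁿ` in Kummer's function `₁F₁(a, b; z)`. -/
noncomputable def kummerCoeff (a b : ℝ) (n : ℕ) : ℝ :=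
  (∏ i ∈ Finset.range n, (a + i)) / ((∏ i ∈ Finset.range n, (b + i)) * n.factorial)

lemma abs_kummerCoeff_le {a b : ℝ} (ha : 0 ≤ a) (hab : a ≤ b) (n : ℕ) :
    |kummerCoeff a b n| ≤ (n.factorial : ℝ)⁻¹ := by
  have hP : 0 ≤ ∏ i ∈ Finset.range n, (a + i) := Finset.prod_nonneg fun i _ => by positivity
  have hPQ : ∏ i ∈ Finset.range n, (a + i) ≤ ∏ i ∈ Finset.range n, (b + i) :=
    Finset.prod_le_prod (fun i _ => by positivity) fun i _ => by linarith
  have hPQ_le_one := div_le_one_of_le₀ hPQ (hP.trans hPQ)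
  rw [kummerCoeff, div_mul_eq_div_div,
    abs_of_nonneg (div_nonneg (div_nonneg hP (hP.trans hPQ)) (Nat.cast_nonneg _)), ← one_div]
  exact div_le_div_of_nonneg_right hPQ_le_one (by positivity)

lemma summable_kummerCoeff_mul_pow {a b : ℝ} (ha : 0 ≤ a) (hab : a ≤ b) (z : ℝ) :
    Summable fun n => kummerCoeff a b n * z ^ n := by
  refine (Real.summable_pow_div_factorial |z|).of_norm_bounded fun n => ?_
  rw [Real.norm_eq_abs, abs_mul, abs_pow, div_eq_inv_mul]
  exact mul_le_mul_of_nonneg_right (abs_kummerCoeff_le ha hab n) (by positivity)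

lemma hasSum_rpow_mul_one_sub_rpow_mul_exp {a b t : ℝ} (ht : t ∈ Ioo (0 : ℝ) 1) (z : ℝ) :
    HasSum (fun n : ℕ => z ^ n / n.factorial * (t ^ (a + n - 1) * (1 - t) ^ (b - a - 1)))
      (t ^ (a - 1) * (1 - t) ^ (b - a - 1) * Real.exp (z * t)) := by
  have hexp : HasSum (fun n : ℕ => (z * t) ^ n / n.factorial) (Real.exp (z * t)) := by
    rw [Real.exp_eq_exp_ℝ]
    exact NormedSpace.expSeries_div_hasSum_exp (z * t)
  refine (hexp.mul_left (t ^ (a - 1) * (1 - t) ^ (b - a - 1))).congr_fun fun n => ?_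
  rw [add_sub_right_comm, Real.rpow_add ht.1, Real.rpow_natCast, mul_pow]
  ring

lemma integrableOn_rpow_mul_one_sub_rpow_mul_exp {a b : ℝ} (ha : 0 < a) (hab : a < b)
    (z : ℝ) :
    IntegrableOn (fun t : ℝ => t ^ (a - 1) * (1 - t) ^ (b - a - 1) * Real.exp (z * t))
      (Ioo 0 1) := by
  refine ((integrableOn_rpow_mul_one_sub_rpow ha (sub_pos.2 hab)).mul_const
    (Real.exp |z|)).mono' (by fun_prop) ((ae_restrict_iff' measurableSet_Ioo).2 <|
      ae_of_all _ fun t ht => ?_)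
  have hbeta : 0 ≤ t ^ (a - 1) * (1 - t) ^ (b - a - 1) :=
    mul_nonneg (Real.rpow_nonneg ht.1.le _) (Real.rpow_nonneg (sub_nonneg.2 ht.2.le) _)
  have hzt : z * t ≤ |z| := by nlinarith [le_abs_self z, abs_nonneg z, ht.1, ht.2]
  rw [Real.norm_of_nonneg (by positivity)]
  exact mul_le_mul_of_nonneg_left (Real.exp_le_exp.2 hzt) hbeta

theorem integral_rpow_mul_one_sub_rpow_mul_exp {a b : ℝ} (ha : 0 < a) (hab : a < b) (z : ℝ) :
    ∫ t in Ioo (0 : ℝ) 1, t ^ (a - 1) * (1 - t) ^ (b - a - 1) * Real.exp (z * t) =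
      Real.Gamma a * Real.Gamma (b - a) / Real.Gamma b * ∑' n, kummerCoeff a b n * z ^ n := by
  set B := Real.Gamma a * Real.Gamma (b - a) / Real.Gamma b
  set F : ℕ → ℝ → ℝ := fun n t =>
    z ^ n / n.factorial * (t ^ (a + n - 1) * (1 - t) ^ (b - a - 1))
  have hF_int (n : ℕ) : IntegrableOn (F n) (Ioo 0 1) :=
    (integrableOn_rpow_mul_one_sub_rpow (by positivity) (sub_pos.2 hab)).const_mul _
  have hF_integral (w : ℝ) (n : ℕ) :
      ∫ t in Ioo (0 : ℝ) 1, w ^ n / n.factorial * (t ^ (a + n - 1) * (1 - t) ^ (b - a - 1)) =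
        B * (kummerCoeff a b n * w ^ n) := by
    rw [integral_const_mul, integral_rpow_add_nat_mul_one_sub_rpow ha hab, kummerCoeff]
    ring
  have hF_norm (n : ℕ) :
      ∫ t in Ioo (0 : ℝ) 1, ‖F n t‖ = B * (kummerCoeff a b n * |z| ^ n) := by
    rw [← hF_integral]
    refine setIntegral_congr_fun measurableSet_Ioo fun t ht => ?_
    have hbeta : 0 ≤ t ^ (a + n - 1) * (1 - t) ^ (b - a - 1) :=
      mul_nonneg (Real.rpow_nonneg ht.1.le _) (Real.rpow_nonneg (sub_nonneg.2 ht.2.le) _)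
    rw [Real.norm_eq_abs, abs_mul, abs_div, abs_pow, Nat.abs_cast, abs_of_nonneg hbeta]
  have hF_sum := hasSum_integral_of_summable_integral_norm hF_int <| by
    simpa only [hF_norm] using (summable_kummerCoeff_mul_pow ha.le hab.le |z|).mul_left B
  calc ∫ t in Ioo (0 : ℝ) 1, t ^ (a - 1) * (1 - t) ^ (b - a - 1) * Real.exp (z * t)
      = ∫ t in Ioo (0 : ℝ) 1, ∑' n, F n t := setIntegral_congr_fun measurableSet_Ioo
        fun t ht => (hasSum_rpow_mul_one_sub_rpow_mul_exp ht z).tsum_eq.symm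
    _ = ∑' n, ∫ t in Ioo (0 : ℝ) 1, F n t := hF_sum.tsum_eq.symm
    _ = B * ∑' n, kummerCoeff a b n * z ^ n := by
      rw [tsum_congr (hF_integral z), tsum_mul_left]

lemma div_one_sub_rpow_mul_exp_eqOn {s : ℝ} (z : ℝ) :
    EqOn (fun p : ℝ => (p / (1 - p)) ^ s * Real.exp (z * p))
      (fun p => p ^ (1 + s - 1) * (1 - p) ^ (2 - (1 + s) - 1) * Real.exp (z * p)) (Ioo 0 1) :=
  fun p hp => by
    have h1p : 0 ≤ 1 - p := sub_nonneg.2 hp.2.le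
    dsimp only
    rw [add_sub_cancel_left, show (2 : ℝ) - (1 + s) - 1 = -s by ring,
      Real.div_rpow hp.1.le h1p, Real.rpow_neg h1p, div_eq_mul_inv]

lemma integrableOn_div_one_sub_rpow_mul_exp {s : ℝ} (hs₀ : -1 < s) (hs₁ : s < 1) (z : ℝ) :
    IntegrableOn (fun p : ℝ => (p / (1 - p)) ^ s * Real.exp (z * p)) (Ioo 0 1) :=
  (integrableOn_rpow_mul_one_sub_rpow_mul_exp (by linarith) (by linarith) z).congr_fun
    (div_one_sub_rpow_mul_exp_eqOn z).symm measurableSet_Ioo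

lemma integral_div_one_sub_rpow_mul_exp {s : ℝ} (hs₀ : -1 < s) (hs₁ : s < 1) (z : ℝ) :
    ∫ p in Ioo (0 : ℝ) 1, (p / (1 - p)) ^ s * Real.exp (z * p) =
      Real.Gamma (1 + s) * Real.Gamma (1 - s) * ∑' n, kummerCoeff (1 + s) 2 n * z ^ n := by
  rw [setIntegral_congr_fun measurableSet_Ioo (div_one_sub_rpow_mul_exp_eqOn z),
    integral_rpow_mul_one_sub_rpow_mul_exp (by linarith) (by linarith),
    show (2 : ℝ) - (1 + s) = 1 - s by ring, Real.Gamma_two, div_one]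

theorem efld_moment_formula_general
    (α β κ r : ℝ) (hβ : 0 < β) (hr : 0 < r) (hrβ : r * β < 1) :
    IntegrableOn
      (fun p : ℝ => Real.exp (r * α) * (p / (1 - p)) ^ (r * β) * Real.exp (r * β * κ * p))
      (Set.Ioo 0 1) ∧
    Summable (fun n : ℕ =>
      (∏ i ∈ Finset.range n, (1 + r * β + (i : ℝ))) /
        ((∏ i ∈ Finset.range n, ((2 : ℝ) + (i : ℝ))) * (n.factorial : ℝ)) *
        (r * β * κ) ^ n) ∧
    ∫ p in Set.Ioo (0 : ℝ) 1,
        Real.exp (r * α) * (p / (1 - p)) ^ (r * β) * Real.exp (r * β * κ * p) =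
      Real.exp (r * α) * (Real.pi * (r * β) / Real.sin (Real.pi * (r * β))) *
        ∑' n : ℕ,
          (∏ i ∈ Finset.range n, (1 + r * β + (i : ℝ))) /
            ((∏ i ∈ Finset.range n, ((2 : ℝ) + (i : ℝ))) * (n.factorial : ℝ)) *
            (r * β * κ) ^ n := by
  have hs : 0 < r * β := mul_pos hr hβ
  refine ⟨?_, summable_kummerCoeff_mul_pow (by linarith) (by linarith) _, ?_⟩
  · simp_rw [mul_assoc (Real.exp (r * α))]
    exact (integrableOn_div_one_sub_rpow_mul_exp (by linarith) hrβ _).const_mul _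
  · simp_rw [mul_assoc (Real.exp (r * α)), integral_const_mul]
    rw [integral_div_one_sub_rpow_mul_exp (by linarith) hrβ,
      Real.Gamma_one_add_mul_Gamma_one_sub hs.ne']
    rfl

/-- Lemma 4.1 of the paper: for `rβ < 1` the `r`-th moment of `EFLD(α,β,κ)`, i.e.
`∫₀¹ exp(rα)·(p/(1−p))^{rβ}·exp(rβκp) dp`, is finite and equals
`exp(rα)·₁F₁(1+rβ, 2; rβκ)·π·rβ/sin(π·rβ)`, where the confluent hypergeometric
series `₁F₁` is written via rising factorials. -/
theorem efld_moment_formula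
    (α β κ r : ℝ) (hβ : 0 < β) (hκ : 0 < κ) (hr : 0 < r) (hrβ : r * β < 1) :
    IntegrableOn
      (fun p : ℝ => Real.exp (r * α) * (p / (1 - p)) ^ (r * β) * Real.exp (r * β * κ * p))
      (Set.Ioo 0 1) ∧
    Summable (fun n : ℕ =>
      (∏ i ∈ Finset.range n, (1 + r * β + (i : ℝ))) /
        ((∏ i ∈ Finset.range n, ((2 : ℝ) + (i : ℝ))) * (n.factorial : ℝ)) *
        (r * β * κ) ^ n) ∧
    ∫ p in Set.Ioo (0 : ℝ) 1,
        Real.exp (r * α) * (p / (1 - p)) ^ (r * β) * Real.exp (r * β * κ * p) =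
      Real.exp (r * α) * (Real.pi * (r * β) / Real.sin (Real.pi * (r * β))) *
        ∑' n : ℕ,
          (∏ i ∈ Finset.range n, (1 + r * β + (i : ℝ))) /
            ((∏ i ∈ Finset.range n, ((2 : ℝ) + (i : ℝ))) * (n.factorial : ℝ)) *
            (r * β * κ) ^ n :=
  efld_moment_formula_general α β κ r hβ hr hrβ
end

section
/- Let α ∈ ℝ, β > 0, κ > 0 and r > 0 with rβ ≥ 1. Then the function p ↦ exp(rα)·(p/(1−p))^{rβ}·exp(rβκp) is not integrable on (0,1); equivalently, ∫₀¹ exp(rα)·(p/(1−p))^{rβ}·exp(rβκp) dp = +∞. -/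
/-!
On `(1/2, 1)` the odds `p / (1 - p)` are at least `1`, so raising them to the power `rβ ≥ 1` only
increases them, and the factor `exp (rβκp)` is at least `1`; hence the integrand dominates
`exp (rα) / 2 · (1 - p)⁻¹`, whose integral diverges logarithmically at `p = 1`.
-/

open MeasureTheory Set Real

theorem not_integrableOn_Ioo_inv_one_sub {a : ℝ} (ha : a < 1) :
    ¬ IntegrableOn (fun p : ℝ => (1 - p)⁻¹) (Ioo a 1) := by
  intro h
  have hint : IntervalIntegrable (fun p : ℝ => (p - 1)⁻¹) volume a 1 := by
    rw [intervalIntegrable_iff_integrableOn_Ioo_of_le ha.le]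
    simpa only [← neg_sub (1 : ℝ), inv_neg, Pi.neg_def] using h.neg
  simp [ha.ne, ha.le] at hint

theorem inv_one_sub_le_efld_integrand {α β κ r p : ℝ} (hκ : 0 ≤ κ) (hrβ : 1 ≤ r * β)
    (hp : p ∈ Ioo (1 / 2) 1) :
    exp (r * α) / 2 * (1 - p)⁻¹ ≤
      exp (r * α) * (p / (1 - p)) ^ (r * β) * exp (r * β * κ * p) := by
  obtain ⟨hp₁, hp₂⟩ := hp
  have hq : 0 < 1 - p := sub_pos.2 hp₂
  have hodds : 1 ≤ p / (1 - p) := (one_le_div hq).2 (by linarith)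
  have hexp : 1 ≤ exp (r * β * κ * p) :=
    one_le_exp (mul_nonneg (mul_nonneg (by linarith) hκ) (by linarith))
  calc exp (r * α) / 2 * (1 - p)⁻¹ = exp (r * α) * (1 / 2 / (1 - p)) := by ring
    _ ≤ exp (r * α) * (p / (1 - p)) := by gcongr
    _ ≤ exp (r * α) * (p / (1 - p)) ^ (r * β) := by
      gcongr
      simpa using rpow_le_rpow_of_exponent_le hodds hrβ
    _ ≤ exp (r * α) * (p / (1 - p)) ^ (r * β) * exp (r * β * κ * p) :=
      le_mul_of_one_le_right (by positivity) hexp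

theorem efld_moment_infinite_general
    (α β κ r : ℝ) (hκ : 0 < κ) (hrβ : 1 ≤ r * β) :
    ¬ IntegrableOn
        (fun p : ℝ => Real.exp (r * α) * (p / (1 - p)) ^ (r * β) * Real.exp (r * β * κ * p))
        (Set.Ioo 0 1) ∧
    ∫⁻ p in Set.Ioo (0 : ℝ) 1,
        ENNReal.ofReal
          (Real.exp (r * α) * (p / (1 - p)) ^ (r * β) * Real.exp (r * β * κ * p)) = ⊤ := by
  have hmeas : Measurable fun p : ℝ =>
      exp (r * α) * (p / (1 - p)) ^ (r * β) * exp (r * β * κ * p) := by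
    fun_prop
  have hnot : ¬ IntegrableOn
      (fun p : ℝ => exp (r * α) * (p / (1 - p)) ^ (r * β) * exp (r * β * κ * p)) (Ioo 0 1) := by
    intro hf
    have hbound : IntegrableOn (fun p : ℝ => exp (r * α) / 2 * (1 - p)⁻¹) (Ioo (1 / 2) 1) := by
      refine (hf.mono_set (Ioo_subset_Ioo_left (by norm_num))).mono'
        (by fun_prop : Measurable _).aestronglyMeasurable ?_
      filter_upwards [ae_restrict_mem measurableSet_Ioo] with p hp
      have hq : 0 < 1 - p := sub_pos.2 hp.2
      rw [Real.norm_of_nonneg (by positivity)]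
      exact inv_one_sub_le_efld_integrand hκ.le hrβ hp
    exact not_integrableOn_Ioo_inv_one_sub (by norm_num : (1 / 2 : ℝ) < 1)
      ((integrable_const_mul_iff (by positivity : exp (r * α) / 2 ≠ 0).isUnit _).1 hbound)
  refine ⟨hnot, not_ne_iff.1 fun hfin => hnot ?_⟩
  refine (lintegral_ofReal_ne_top_iff_integrable hmeas.aestronglyMeasurable ?_).1 hfin
  filter_upwards [ae_restrict_mem measurableSet_Ioo] with p hp
  have hodds : 0 ≤ p / (1 - p) := div_nonneg hp.1.le (sub_pos.2 hp.2).le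
  positivity

/-- Second assertion of Lemma 4.1: for `rβ ≥ 1` the `r`-th moment of `EFLD(α,β,κ)` is
infinite, i.e. the integrand is not integrable on `(0,1)` and its (lower Lebesgue)
integral is `+∞`. -/
theorem efld_moment_infinite
    (α β κ r : ℝ) (hβ : 0 < β) (hκ : 0 < κ) (hr : 0 < r) (hrβ : 1 ≤ r * β) :
    ¬ IntegrableOn
        (fun p : ℝ => Real.exp (r * α) * (p / (1 - p)) ^ (r * β) * Real.exp (r * β * κ * p))
        (Set.Ioo 0 1) ∧
    ∫⁻ p in Set.Ioo (0 : ℝ) 1,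
        ENNReal.ofReal
          (Real.exp (r * α) * (p / (1 - p)) ^ (r * β) * Real.exp (r * β * κ * p)) = ⊤ :=
  efld_moment_infinite_general α β κ r hκ hrβ
end

section
/- Let α ∈ ℝ, β > 0, κ > 0. Then the function p ↦ α + β(log(p/(1−p)) + κp) is integrable on (0,1) and ∫₀¹ [α + β(log(p/(1−p)) + κp)] dp = α + βκ/2. -/
open MeasureTheory

namespace Real

/-- Holds for every real `p`: at `p = 0` and `p = 1` both sides vanish since `log 0 = 0`. -/
theorem log_div_one_sub (p : ℝ) : log (p / (1 - p)) = log p - log (1 - p) := by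
  rcases eq_or_ne p 0 with rfl | hp0
  · simp
  rcases eq_or_ne p 1 with rfl | hp1
  · simp
  exact log_div hp0 (sub_ne_zero.2 hp1.symm)

theorem intervalIntegrable_log_one_sub (a b : ℝ) :
    IntervalIntegrable (fun p => log (1 - p)) volume a b := by
  simpa using
    (intervalIntegral.intervalIntegrable_log' (a := 1 - b) (b := 1 - a)).comp_sub_left 1 |>.symm

theorem intervalIntegrable_log_div_one_sub (a b : ℝ) :
    IntervalIntegrable (fun p => log (p / (1 - p))) volume a b := by
  simpa only [log_div_one_sub] using
    intervalIntegral.intervalIntegrable_log'.sub (intervalIntegrable_log_one_sub a b)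

/-- `∫₀¹ log p = ∫₀¹ log (1 - p)` by the reflection `p ↦ 1 - p`. -/
theorem integral_log_div_one_sub_zero_one : ∫ p in (0 : ℝ)..1, log (p / (1 - p)) = 0 := by
  simp only [log_div_one_sub]
  rw [intervalIntegral.integral_sub intervalIntegral.intervalIntegrable_log'
      (intervalIntegrable_log_one_sub 0 1),
    intervalIntegral.integral_comp_sub_left (fun p => log p)]
  simp

end Real

open Real

theorem fld_mean_general
    (α β κ : ℝ) :
    IntegrableOn (fun p : ℝ => α + β * (Real.log (p / (1 - p)) + κ * p)) (Set.Ioo 0 1) ∧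
    ∫ p in Set.Ioo (0 : ℝ) 1, (α + β * (Real.log (p / (1 - p)) + κ * p)) =
      α + β * κ / 2 := by
  have hlogit := intervalIntegrable_log_div_one_sub 0 1
  have hlin : IntervalIntegrable (fun p : ℝ => κ * p) volume 0 1 :=
    (continuous_const.mul continuous_id).intervalIntegrable 0 1
  have hscaled := (hlogit.add hlin).const_mul β
  refine ⟨(intervalIntegrable_iff_integrableOn_Ioo_of_le zero_le_one).1
    (intervalIntegrable_const.add hscaled), ?_⟩
  rw [← integral_Ioc_eq_integral_Ioo, ← intervalIntegral.integral_of_le zero_le_one,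
    intervalIntegral.integral_add intervalIntegrable_const hscaled,
    intervalIntegral.integral_const_mul, intervalIntegral.integral_add hlogit hlin,
    integral_log_div_one_sub_zero_one, intervalIntegral.integral_const_mul,
    intervalIntegral.integral_const, integral_id]
  simp only [smul_eq_mul]
  ring

/-- The mean of the flattened logistic distribution `FLD(α,β,κ)`: the quantile function
`p ↦ α + β(log(p/(1−p)) + κp)` is integrable on `(0,1)` with integral `α + βκ/2`
(Section 4.1 of the paper). -/
theorem fld_mean
    (α β κ : ℝ) (hβ : 0 < β) (hκ : 0 < κ) :
    IntegrableOn (fun p : ℝ => α + β * (Real.log (p / (1 - p)) + κ * p)) (Set.Ioo 0 1) ∧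
    ∫ p in Set.Ioo (0 : ℝ) 1, (α + β * (Real.log (p / (1 - p)) + κ * p)) =
      α + β * κ / 2 :=
  fld_mean_general α β κ
end
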